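/- Let S = conv(X₁, …, X_N) be a conditional simplex in (L⁰)^d. For every permutation π of {1, …, N}, the elements Y₁^π, …, Y_N^π (where Y_k^π = (1/k) Σᵢ₌₁ᵏ X_{π(i)}) are affinely independent; hence each member C_π of the barycentric subdivision of S is a conditional simplex of dimension N. -/

import Mathlib

open MeasureTheory Filter

noncomputable section

variable {Ω : Type*} [MeasurableSpace Ω]

/-- `L⁰(Ω,𝒜,P)`: equivalence classes of real-valued measurable functions modulo
`P`-almost-sure equality. -/
abbrev L0 (P : Measure Ω) : Type _ := Ω →ₘ[P] ℝ

namespace L0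

variable (P : Measure Ω)

/-- The indicator `1_A` of a measurable set as an element of `L⁰`. -/
def ind (A : Set Ω) : L0 P :=
  letI := Classical.dec (MeasurableSet A)
  if h : MeasurableSet A then
    AEEqFun.mk (A.indicator fun _ => (1 : ℝ)) (aestronglyMeasurable_const.indicator h)
  else 0

/-- A partition: a countable family of measurable sets, pairwise disjoint up to null
sets, covering `Ω` up to a null set. -/
structure IsPartition (A : ℕ → Set Ω) : Prop where
  meas : ∀ i, MeasurableSet (A i)
  disj : ∀ i j, i ≠ j → P (A i ∩ A j) = 0
  full : P (⋃ i, A i) = 1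

/-- `Z = Σᵢ 1_{Aᵢ} Xᵢ` in `L⁰`: `Z` agrees with `Xᵢ` on `Aᵢ`, i.e. `1_{Aᵢ}·Z = 1_{Aᵢ}·Xᵢ`. -/
def IsGluing1 (A : ℕ → Set Ω) (X : ℕ → L0 P) (Z : L0 P) : Prop :=
  ∀ i, ind P (A i) * Z = ind P (A i) * X i

/-- `Z = Σᵢ 1_{Aᵢ} Xᵢ` in `(L⁰)^d`. -/
def IsGluing {d : ℕ} (A : ℕ → Set Ω) (X : ℕ → Fin d → L0 P) (Z : Fin d → L0 P) : Prop :=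
  ∀ k, IsGluing1 P A (fun i => X i k) (Z k)

/-- The σ-stable hull `σ(𝒞)` of a set `𝒞 ⊆ (L⁰)^d`. -/
def sigmaHull {d : ℕ} (C : Set (Fin d → L0 P)) : Set (Fin d → L0 P) :=
  {Z | ∃ (A : ℕ → Set Ω) (X : ℕ → Fin d → L0 P),
    IsPartition P A ∧ (∀ i, X i ∈ C) ∧ IsGluing P A X Z}

/-- A function `f` defined (at least) on a σ-stable set `C ⊆ (L⁰)^d` is local if
`f(Σᵢ 1_{Aᵢ} Xᵢ) = Σᵢ 1_{Aᵢ} f(Xᵢ)` for every partition `(Aᵢ)` and family `(Xᵢ)` in `C`. -/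
def IsLocal {d e : ℕ} (C : Set (Fin d → L0 P)) (f : (Fin d → L0 P) → (Fin e → L0 P)) : Prop :=
  ∀ (A : ℕ → Set Ω) (X : ℕ → Fin d → L0 P) (Z : Fin d → L0 P),
    IsPartition P A → (∀ i, X i ∈ C) → Z ∈ C → IsGluing P A X Z →
    IsGluing P A (fun i => f (X i)) (f Z)

/-- Locality for functions with values in `L⁰`. -/
def IsLocalScalar {d : ℕ} (C : Set (Fin d → L0 P)) (f : (Fin d → L0 P) → L0 P) : Prop :=
  ∀ (A : ℕ → Set Ω) (X : ℕ → Fin d → L0 P) (Z : Fin d → L0 P),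
    IsPartition P A → (∀ i, X i ∈ C) → Z ∈ C → IsGluing P A X Z →
    IsGluing1 P A (fun i => f (X i)) (f Z)

/-- Locality for functions from `L⁰` to `L⁰`. -/
def IsLocal1 (C : Set (L0 P)) (f : L0 P → L0 P) : Prop :=
  ∀ (A : ℕ → Set Ω) (X : ℕ → L0 P) (Z : L0 P),
    IsPartition P A → (∀ i, X i ∈ C) → Z ∈ C → IsGluing1 P A X Z →
    IsGluing1 P A (fun i => f (X i)) (f Z)

/-- `P`-almost sure convergence of a sequence in `L⁰`. -/
def TendstoAS (X : ℕ → L0 P) (Y : L0 P) : Prop :=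
  ∀ᵐ ω ∂P, Tendsto (fun n => X n ω) atTop (nhds (Y ω))

/-- `P`-almost sure convergence of a sequence in `(L⁰)^d`. -/
def TendstoASd {d : ℕ} (X : ℕ → Fin d → L0 P) (Y : Fin d → L0 P) : Prop :=
  ∀ k, TendstoAS P (fun n => X n k) (Y k)

/-- Sequential continuity (w.r.t. `P`-a.s. convergence) of `f` on `C ⊆ (L⁰)^d`. -/
def SeqContinuous {d e : ℕ} (C : Set (Fin d → L0 P)) (f : (Fin d → L0 P) → (Fin e → L0 P)) :
    Prop :=
  ∀ (X : ℕ → Fin d → L0 P) (Y : Fin d → L0 P), (∀ n, X n ∈ C) → Y ∈ C →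
    TendstoASd P X Y → TendstoASd P (fun n => f (X n)) (f Y)

/-- Sequential continuity for functions from `L⁰` to `L⁰`. -/
def SeqContinuous1 (C : Set (L0 P)) (f : L0 P → L0 P) : Prop :=
  ∀ (X : ℕ → L0 P) (Y : L0 P), (∀ n, X n ∈ C) → Y ∈ C →
    TendstoAS P X Y → TendstoAS P (fun n => f (X n)) (f Y)

/-- The `L⁰`-convex hull `conv(X₁,…,X_N)` of a finite family in `(L⁰)^d`. -/
def conv {d : ℕ} {ι : Type*} [Fintype ι] (X : ι → Fin d → L0 P) : Set (Fin d → L0 P) :=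
  {Y | ∃ lam : ι → L0 P, (∀ i, 0 ≤ lam i) ∧ (∑ i, lam i) = 1 ∧ Y = ∑ i, lam i • X i}

/-- The affine hull `aff(X₁,…,X_N)` of a finite family in `(L⁰)^d`. -/
def aff {d : ℕ} {ι : Type*} [Fintype ι] (X : ι → Fin d → L0 P) : Set (Fin d → L0 P) :=
  {Y | ∃ lam : ι → L0 P, (∑ i, lam i) = 1 ∧ Y = ∑ i, lam i • X i}

/-- Affine independence of `X₁,…,X_N` in `(L⁰)^d`: either `N = 1`, or `N > 1` and
`Σᵢ₌₁^{N−1} λᵢ (Xᵢ − X_N) = 0` implies `λ₁ = ⋯ = λ_{N−1} = 0`. -/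
def AffInd {d : ℕ} : {N : ℕ} → (X : Fin N → Fin d → L0 P) → Prop
  | 0, _ => False
  | 1, _ => True
  | (m + 2), X => ∀ lam : Fin (m + 1) → L0 P,
      (∑ i : Fin (m + 1), lam i • (X i.castSucc - X (Fin.last (m + 1)))) = 0 → ∀ i, lam i = 0

/-- The `L⁰`-scalar product on `(L⁰)^d`. -/
def inner {d : ℕ} (X Y : Fin d → L0 P) : L0 P := ∑ k, X k * Y k

/-- The `L⁰`-norm on `(L⁰)^d`. -/
def norm {d : ℕ} (X : Fin d → L0 P) : L0 P :=
  AEEqFun.comp Real.sqrt Real.continuous_sqrt (inner P X X)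

/-- `D` is the essential supremum (least upper bound in the `P`-a.s. order) of a set
`F ⊆ L⁰`. -/
def IsEssSup (F : Set (L0 P)) (D : L0 P) : Prop :=
  (∀ X ∈ F, X ≤ D) ∧ ∀ D' : L0 P, (∀ X ∈ F, X ≤ D') → D ≤ D'

/-- `𝒞 ⊆ (L⁰)^d` is bounded if `esssup_{X ∈ 𝒞} ‖X‖` belongs to `L⁰`. -/
def Bounded {d : ℕ} (C : Set (Fin d → L0 P)) : Prop :=
  ∃ b : L0 P, ∀ X ∈ C, norm P X ≤ b

/-- `𝒞 ⊆ (L⁰)^d` is sequentially closed if it contains all `P`-a.s. limits of its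
sequences. -/
def SeqClosed {d : ℕ} (C : Set (Fin d → L0 P)) : Prop :=
  ∀ (X : ℕ → Fin d → L0 P) (Y : Fin d → L0 P), (∀ n, X n ∈ C) → TendstoASd P X Y → Y ∈ C

/-- `L⁰`-convexity of a subset of `(L⁰)^d`. -/
def L0Convex {d : ℕ} (C : Set (Fin d → L0 P)) : Prop :=
  ∀ X ∈ C, ∀ Y ∈ C, ∀ lam : L0 P, 0 ≤ lam → lam ≤ 1 → lam • X + (1 - lam) • Y ∈ C

/-- The vertices `Y_k^π = (1/k) Σᵢ₌₁ᵏ X_{π(i)}` of the member `C_π` of the barycentric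
subdivision (0-based: `bary P X π k = (1/(k+1)) Σ_{i ≤ k} X_{π(i)}`). -/
def bary {d N : ℕ} (X : Fin N → Fin d → L0 P) (π : Equiv.Perm (Fin N)) (k : Fin N) :
    Fin d → L0 P :=
  ((k.1 + 1 : ℝ)⁻¹) • ∑ i ∈ Finset.univ.filter (· ≤ k), X (π i)

end L0

end

/-!
The vertices `Y_k^π` arise from the family `X ∘ π` through the lower-triangular matrix with
entries `(k + 1)⁻¹` on and below the diagonal. Its rows sum to `1`, so an affine relation
`∑ wₖ Yₖ = 0`, `∑ wₖ = 0` among the `Y`'s becomes the affine relation with weights `w B` among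
the `X`'s; hence `w B = 0`, and `w = 0` because `det B = ∏ (k + 1)⁻¹` is a unit.
-/

namespace MeasureTheory.AEEqFun

variable {α γ : Type*} [MeasurableSpace α] {μ : Measure α}
  [TopologicalSpace γ] [CommRing γ] [IsTopologicalRing γ]

noncomputable instance instCommRing : CommRing (α →ₘ[μ] γ) :=
  { (inferInstance : AddCommGroup (α →ₘ[μ] γ)), (inferInstance : CommMonoid (α →ₘ[μ] γ)) with
    left_distrib := fun a b c => toGerm_injective <| by
      simp only [mul_toGerm, add_toGerm, mul_add]
    right_distrib := fun a b c => toGerm_injective <| by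
      simp only [mul_toGerm, add_toGerm, add_mul]
    zero_mul := fun a => toGerm_injective <| by simp only [mul_toGerm, zero_toGerm, zero_mul]
    mul_zero := fun a => toGerm_injective <| by simp only [mul_toGerm, zero_toGerm, mul_zero] }

noncomputable instance instAlgebra {𝕜 : Type*} [CommSemiring 𝕜] [Algebra 𝕜 γ]
    [ContinuousConstSMul 𝕜 γ] : Algebra 𝕜 (α →ₘ[μ] γ) :=
  Algebra.ofModule
    (fun c f g => induction_on₂ f g fun f _ g _ => by
      simp only [smul_mk, mk_mul_mk, smul_mul_assoc])
    (fun c f g => induction_on₂ f g fun f _ g _ => by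
      simp only [smul_mk, mk_mul_mk, mul_smul_comm])

end MeasureTheory.AEEqFun

open Finset

section AffineCombination

open Matrix

variable {R M ι κ : Type*} [Ring R] [AddCommGroup M] [Module R M] [Fintype ι] [Fintype κ]

theorem AffineIndependent.sum_smul_of_injective_vecMul {p : ι → M} (hp : AffineIndependent R p)
    {A : Matrix κ ι R} (hA : ∀ j, ∑ i, A j i = 1) (hinj : Function.Injective A.vecMul) :
    AffineIndependent R fun j => ∑ i, A j i • p i := by
  refine (affineIndependent_iff_of_fintype R _).2 fun w hw hwq => ?_
  rw [weightedVSub_eq_linear_combination _ hw] at hwq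
  have hsum : ∑ i, (w ᵥ* A) i = 0 := by
    simp only [vecMul, dotProduct]
    rw [sum_comm]
    simp only [← mul_sum, hA, mul_one, hw]
  have hcomb : ∑ i, (w ᵥ* A) i • p i = 0 := by
    simp only [vecMul, dotProduct, sum_smul, smul_sum, mul_smul] at hwq ⊢
    rwa [sum_comm]
  have hv : w ᵥ* A = 0 ᵥ* A := by
    rw [zero_vecMul]
    exact funext fun i => hp.eq_zero_of_sum_eq_zero hsum hcomb i (mem_univ i)
  exact congrFun (hinj hv)

end AffineCombination

section BarycentricMatrix

variable (K : Type*) [Field K] (N : ℕ)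

def baryMatrix : Matrix (Fin N) (Fin N) K :=
  Matrix.of fun k i => if i ≤ k then ((k : ℕ) + 1 : K)⁻¹ else 0

variable [CharZero K]

theorem sum_baryMatrix_row (k : Fin N) : ∑ i, baryMatrix K N k i = 1 := by
  have hcard : #{i | i ≤ k} = (k : ℕ) + 1 := by
    rw [filter_ge_eq_Iic, Fin.card_Iic]
  simp only [baryMatrix, Matrix.of_apply, sum_ite, sum_const_zero, add_zero,
    sum_const, hcard, nsmul_eq_mul]
  push_cast
  exact mul_inv_cancel₀ (Nat.cast_add_one_ne_zero _)

theorem isUnit_baryMatrix : IsUnit (baryMatrix K N) := by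
  have hlower : (baryMatrix K N).IsLowerTriangular := fun k i hki => by
    simp [baryMatrix, not_le.2 (OrderDual.toDual_lt_toDual.1 hki)]
  rw [Matrix.isUnit_iff_isUnit_det, Matrix.det_of_isLowerTriangular _ hlower, isUnit_iff_ne_zero,
    prod_ne_zero_iff]
  intro k _
  simp only [baryMatrix, Matrix.of_apply, le_refl, if_true]
  exact inv_ne_zero (Nat.cast_add_one_ne_zero _)

end BarycentricMatrix

namespace L0

variable {Ω : Type*} [MeasurableSpace Ω] (P : Measure Ω) {d : ℕ}

theorem bary_eq_sum_smul {N : ℕ} (X : Fin N → Fin d → L0 P) (π : Equiv.Perm (Fin N)) (k : Fin N) :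
    bary P X π k = ∑ i, (baryMatrix ℝ N).map (algebraMap ℝ (L0 P)) k i • X (π i) := by
  rw [bary, smul_sum, sum_filter]
  refine sum_congr rfl fun i _ => ?_
  split_ifs with hik <;> simp [baryMatrix, hik, algebraMap_smul]

theorem affInd_iff_affineIndependent {n : ℕ} (X : Fin (n + 1) → Fin d → L0 P) :
    AffInd P X ↔ AffineIndependent (L0 P) X := by
  cases n with
  | zero => exact iff_of_true trivial (affineIndependent_of_subsingleton (ι := Fin 1) _ _)
  | succ m =>
    rw [affineIndependent_iff_linearIndependent_vsub (L0 P) X (Fin.last _),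
      ← linearIndependent_equiv (finSuccAboveEquiv (Fin.last _)), Fintype.linearIndependent_iff]
    simp only [Function.comp_def, finSuccAboveEquiv_apply, Fin.succAbove_last, vsub_eq_sub]
    rfl

theorem affineIndependent_bary {N : ℕ} {X : Fin N → Fin d → L0 P}
    (hX : AffineIndependent (L0 P) X) (π : Equiv.Perm (Fin N)) :
    AffineIndependent (L0 P) (bary P X π) := by
  have hrow : ∀ k, ∑ i, (baryMatrix ℝ N).map (algebraMap ℝ (L0 P)) k i = 1 := fun k => by
    simp only [Matrix.map_apply, ← map_sum, sum_baryMatrix_row, map_one]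
  have hunit := (isUnit_baryMatrix ℝ N).map (algebraMap ℝ (L0 P)).mapMatrix
  rw [funext (bary_eq_sum_smul P X π)]
  exact (hX.comp_embedding π.toEmbedding).sum_smul_of_injective_vecMul hrow
    (Matrix.vecMul_injective_of_isUnit hunit)

end L0

open MeasureTheory in
theorem stmt_8_general {Ω : Type*} [MeasurableSpace Ω] (P : Measure Ω)
    {d N : ℕ} (X : Fin N → Fin d → L0 P) (hX : L0.AffInd P X) :
    ∀ π : Equiv.Perm (Fin N), L0.AffInd P (L0.bary P X π) := by
  intro π
  cases N with
  | zero => exact hX.elim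
  | succ n =>
    rw [L0.affInd_iff_affineIndependent] at hX ⊢
    exact L0.affineIndependent_bary P hX π

open MeasureTheory in
/-- the vertices of each member of the barycentric subdivision are affinely
independent; hence each `C_π` is a conditional simplex of dimension `N`. -/
theorem stmt_8 {Ω : Type*} [MeasurableSpace Ω] (P : Measure Ω) [IsProbabilityMeasure P]
    {d N : ℕ} (X : Fin N → Fin d → L0 P) (hX : L0.AffInd P X) :
    ∀ π : Equiv.Perm (Fin N), L0.AffInd P (L0.bary P X π) :=
  stmt_8_general P X hX
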